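/- For an odd prime p and H, D ∈ ℤ/p such that t² − Ht − D has no root in ℤ/p, the conic C = {(x,y) ∈ ℤ/p × ℤ/p : x² + Hxy − Dy² = 1} has exactly p + 1 elements. -/

import Mathlib

/-!
Project `C` from its point `(-1, 0)`. The line `x = -1 - s * y` meets `C` at `(-1, 0)` and at the
point with `y * (s ^ 2 - H * s - D) = H - 2 * s`; the hypothesis says exactly that this coefficient
never vanishes, so every slope `s` gives one point, and the line `y = 0` (slope `∞`) gives `(1, 0)`.
Conversely every point of `C` lies on exactly one such line, so `C` is in bijection with the
projective line `Option (ZMod p)`, which has `p + 1` elements.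
-/

variable {F : Type*} [Field F] {H D : F}

def conic (H D : F) : Set (F × F) := {P | P.1 ^ 2 + H * P.1 * P.2 - D * P.2 ^ 2 = 1}

def conicParam (H D : F) : Option F → F × F
  | none => (1, 0)
  | some s => ((s ^ 2 + D) / (s ^ 2 - H * s - D), (H - 2 * s) / (s ^ 2 - H * s - D))

/-- The point `(-1, 0)` itself gets the slope `H / 2` of the tangent line there. -/
def conicSlope [DecidableEq F] (H : F) (P : F × F) : Option F :=
  if P.2 = 0 then if P.1 = 1 then none else some (H / 2) else some (-(P.1 + 1) / P.2)

theorem mem_conic_iff_of_eq_line {s x y : F} (hx : x = -1 - s * y) :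
    (x, y) ∈ conic H D ↔ y * (y * (s ^ 2 - H * s - D) - (H - 2 * s)) = 0 := by
  subst hx
  simp only [conic, Set.mem_ofPred_eq]
  constructor <;> intro h <;> linear_combination h

theorem conicParam_some_eq_iff (hirr : ∀ t : F, t ^ 2 - H * t - D ≠ 0) (s x y : F) :
    conicParam H D (some s) = (x, y) ↔ y * (s ^ 2 - H * s - D) = H - 2 * s ∧ x = -1 - s * y := by
  have hQ := hirr s
  simp only [conicParam, Prod.mk.injEq, div_eq_iff hQ]
  refine ⟨fun ⟨hx, hy⟩ => ⟨hy.symm, mul_right_cancel₀ hQ ?_⟩, fun ⟨hy, hx⟩ => ⟨?_, hy.symm⟩⟩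
  · linear_combination -hx - s * hy
  · linear_combination -(s ^ 2 - H * s - D) * hx + s * hy

section
variable (hirr : ∀ t : F, t ^ 2 - H * t - D ≠ 0)
include hirr

theorem conicParam_mem (o : Option F) : conicParam H D o ∈ conic H D := by
  rcases o with _ | s
  · simp [conicParam, conic]
  rcases hP : conicParam H D (some s) with ⟨x, y⟩
  obtain ⟨hy, hx⟩ := (conicParam_some_eq_iff hirr s x y).mp hP
  rw [mem_conic_iff_of_eq_line hx, hy, sub_self, mul_zero]

variable [DecidableEq F] (h2 : (2 : F) ≠ 0)
include h2

theorem conicSlope_conicParam (o : Option F) : conicSlope H (conicParam H D o) = o := by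
  rcases o with _ | s
  · simp [conicParam, conicSlope]
  rcases hP : conicParam H D (some s) with ⟨x, y⟩
  obtain ⟨hy, hx⟩ := (conicParam_some_eq_iff hirr s x y).mp hP
  rw [conicSlope]
  by_cases hy0 : y = 0
  · have hm1 : (-1 : F) ≠ 1 := fun h => h2 (by linear_combination -h)
    subst hy0
    rw [if_pos rfl, hx, mul_zero, sub_zero, if_neg hm1, Option.some_inj, div_eq_iff h2]
    linear_combination -hy
  · simp only [if_neg hy0, Option.some.injEq, hx]
    field_simp
    ring

theorem conicParam_conicSlope {P : F × F} (hP : P ∈ conic H D) :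
    conicParam H D (conicSlope H P) = P := by
  obtain ⟨x, y⟩ := P
  rw [conicSlope]
  by_cases hy0 : y = 0
  · subst hy0
    simp only [conic, Set.mem_ofPred_eq] at hP
    rcases sq_eq_one_iff.mp (by linear_combination hP : x ^ 2 = 1) with rfl | rfl
    · simp [conicParam]
    · have hm1 : (-1 : F) ≠ 1 := fun h => h2 (by linear_combination -h)
      rw [if_pos rfl, if_neg hm1, conicParam_some_eq_iff hirr]
      constructor
      · field_simp; ring
      · ring
  · simp only [if_neg hy0, conicParam_some_eq_iff hirr]
    have hx : x = -1 - (-(x + 1) / y) * y := by field_simp; ring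
    rw [mem_conic_iff_of_eq_line hx, mul_eq_zero, or_iff_right hy0, sub_eq_zero] at hP
    exact ⟨hP, hx⟩

def conicEquivOption : conic H D ≃ Option F where
  toFun P := conicSlope H P
  invFun o := ⟨conicParam H D o, conicParam_mem hirr o⟩
  left_inv P := Subtype.ext (conicParam_conicSlope hirr h2 P.2)
  right_inv := conicSlope_conicParam hirr h2

end

/-- for an odd prime `p` and `H, D ∈ ℤ/p` such that `t² − Ht − D`
has no root in `ℤ/p`, the conic `C = {(x,y) : x² + Hxy − Dy² = 1}` has exactly
`p + 1` elements. -/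
theorem conic_card (p : ℕ) (hp : p.Prime) (hodd : Odd p) (H D : ZMod p)
    (hirr : ∀ t : ZMod p, t ^ 2 - H * t - D ≠ 0) :
    Set.ncard {P : ZMod p × ZMod p | P.1 ^ 2 + H * P.1 * P.2 - D * P.2 ^ 2 = 1}
      = p + 1 := by
  have := Fact.mk hp
  have h2 : (2 : ZMod p) ≠ 0 := by
    refine Ring.two_ne_zero ?_
    rw [ZMod.ringChar_zmod_n]
    rintro rfl
    exact Nat.not_even_iff_odd.mpr hodd even_two
  rw [← Nat.card_coe_set_eq]
  exact (Nat.card_congr (conicEquivOption hirr h2)).trans (by simp)
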